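/- arXiv:2503.16178 — 2 statements merged into one kernel-verified Lean document; each statement's English description precedes it below -/
import Mathlib

section
/- The reduced function h_C(ρ) = √(2(1 − Tr ρ²)) is subadditive on product states: h_C(ρ^A ⊗ ρ^B) ≤ h_C(ρ^A) + h_C(ρ^B) for any density operators ρ^A, ρ^B on finite-dimensional Hilbert spaces. -/
open scoped BigOperators
open Matrix
open scoped ComplexOrder

namespace KPE

noncomputable section

variable {ι κ : Type} [Fintype ι] [DecidableEq ι] [Fintype κ] [DecidableEq κ]

/-- A pure state of the multipartite system with parties `ι` and local dimensions `d`. -/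
def IsState (d : ι → ℕ) (ψ : (∀ i, Fin (d i)) → ℂ) : Prop :=
  ∑ x, Complex.normSq (ψ x) = 1

/-- Merge a configuration on `X` with one on its complement. -/
def glue (d : ι → ℕ) (X : Finset ι) (a : ∀ i : {i // i ∈ X}, Fin (d i))
    (c : ∀ i : {i // i ∉ X}, Fin (d i)) : ∀ i, Fin (d i) :=
  fun i => if h : i ∈ X then a ⟨i, h⟩ else c ⟨i, h⟩

/-- Reduced density matrix of the pure state `ψ` on the subset `X` of parties. -/
def reduced (d : ι → ℕ) (ψ : (∀ i, Fin (d i)) → ℂ) (X : Finset ι) :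
    Matrix (∀ i : {i // i ∈ X}, Fin (d i)) (∀ i : {i // i ∈ X}, Fin (d i)) ℂ :=
  fun a b => ∑ c : ∀ i : {i // i ∉ X}, Fin (d i),
    ψ (glue d X a c) * (starRingEnd ℂ) (ψ (glue d X b c))

/-- The block (fiber) of the partition `P` labelled by `b`. -/
def fiber (P : ι → ι) (b : ι) : Finset ι := Finset.univ.filter fun i => P i = b

/-- A partition is `k`-fine if every block has at most `k` parties. -/
def Fineness (P : ι → ι) (k : ℕ) : Prop := ∀ b, (fiber P b).card ≤ k

/-- `ψ` factors as a tensor product along the blocks of `P`. -/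
def FactorsAlong (d : ι → ℕ) (ψ : (∀ i, Fin (d i)) → ℂ) (P : ι → ι) : Prop :=
  ∃ φ : ∀ b : ι, (∀ i : {i // i ∈ fiber P b}, Fin (d i)) → ℂ,
    ∀ x, ψ x = ∏ b : ι, φ b fun i => x i.1

/-- `k`-producible pure states. -/
def Producible (d : ι → ℕ) (k : ℕ) (ψ : (∀ i, Fin (d i)) → ℂ) : Prop :=
  ∃ P : ι → ι, Fineness P k ∧ FactorsAlong d ψ P

/-- A pure state is genuinely entangled if it is not a product across any bipartition. -/
def GenuinelyEntangled (d : ι → ℕ) (ψ : (∀ i, Fin (d i)) → ℂ) : Prop :=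
  ∀ X : Finset ι, X ≠ ∅ → X ≠ Finset.univ →
    ¬ ∃ (φ : (∀ i : {i // i ∈ X}, Fin (d i)) → ℂ)
        (χ : (∀ i : {i // i ∉ X}, Fin (d i)) → ℂ),
      ∀ x, ψ x = φ (fun i => x i.1) * χ (fun i => x i.1)

/-- The concurrence-type reduced function `h_C(ρ) = √(2(1 − Tr ρ²))`. -/
def hC {α : Type} [Fintype α] (ρ : Matrix α α ℂ) : ℝ :=
  Real.sqrt (2 * (1 - ((ρ * ρ).trace).re))

/-- Von Neumann entropy in bits, via the eigenvalues of a Hermitian matrix. -/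
def vNEntropy {α : Type} [Fintype α] [DecidableEq α] (ρ : Matrix α α ℂ) : ℝ :=
  if h : ρ.IsHermitian then (∑ i, Real.negMulLog (h.eigenvalues i)) / Real.log 2 else 0

/-- A density matrix is pure if it is a rank-one projection `|v⟩⟨v|`. -/
def IsPureMat {α : Type} [Fintype α] (ρ : Matrix α α ℂ) : Prop :=
  ∃ v : α → ℂ, ρ = Matrix.vecMulVec v (star v)

/-- Half the sum of the reduced function over the (nonempty) blocks of the partition `P`. -/
def blockSum (d : ι → ℕ) (h : ∀ (α : Type) [Fintype α] [DecidableEq α], Matrix α α ℂ → ℝ)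
    (ψ : (∀ i, Fin (d i)) → ℂ) (P : ι → ι) : ℝ :=
  (1 / 2) * ∑ b ∈ Finset.univ.filter (fun b => (fiber P b).Nonempty),
      h _ (reduced d ψ (fiber P b))

/-- The minimal-sum `k`-partite entanglement measure `E'_{(k)}`. -/
def Emin (d : ι → ℕ) (h : ∀ (α : Type) [Fintype α] [DecidableEq α], Matrix α α ℂ → ℝ)
    (k : ℕ) (ψ : (∀ i, Fin (d i)) → ℂ) : ℝ :=
  sInf { x | ∃ P : ι → ι, Fineness P (k - 1) ∧ x = blockSum d h ψ P }

/-- The averaged measure `C_{(k)}` (average instead of sum over blocks). -/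
def Cavg (d : ι → ℕ) (h : ∀ (α : Type) [Fintype α] [DecidableEq α], Matrix α α ℂ → ℝ)
    (k : ℕ) (ψ : (∀ i, Fin (d i)) → ℂ) : ℝ :=
  sInf { x | ∃ P : ι → ι, Fineness P (k - 1) ∧
    x = (∑ b ∈ Finset.univ.filter (fun b => (fiber P b).Nonempty),
          h _ (reduced d ψ (fiber P b))) /
        ((Finset.univ.filter (fun b => (fiber P b).Nonempty)).card : ℝ) }

/-- The density matrix `|ψ⟩⟨ψ|` of a pure state. -/
def pureDensity (d : ι → ℕ) (ψ : (∀ i, Fin (d i)) → ℂ) :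
    Matrix (∀ i, Fin (d i)) (∀ i, Fin (d i)) ℂ :=
  fun a b => ψ a * (starRingEnd ℂ) (ψ b)

/-- The set of `k`-producible mixed states: convex combinations of `k`-producible
pure-state density matrices. -/
def ProducibleMixed (d : ι → ℕ) (k : ℕ) :
    Set (Matrix (∀ i, Fin (d i)) (∀ i, Fin (d i)) ℂ) :=
  convexHull ℝ { ρ | ∃ ψ, IsState d ψ ∧ Producible d k ψ ∧ ρ = pureDensity d ψ }

/-- Tensor product of pure states on disjoint sets of parties. -/
def tens (d : ι → ℕ) (e : κ → ℕ) (ψ : (∀ i, Fin (d i)) → ℂ) (φ : (∀ j, Fin (e j)) → ℂ) :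
    (∀ i : ι ⊕ κ, Fin (Sum.elim d e i)) → ℂ :=
  fun x => ψ (fun i => x (Sum.inl i)) * φ (fun j => x (Sum.inr j))

/-- Convex-roof extension of a pure-state functional to mixed states. -/
def roof (d : ι → ℕ) (Ep : ((∀ i, Fin (d i)) → ℂ) → ℝ)
    (ρ : Matrix (∀ i, Fin (d i)) (∀ i, Fin (d i)) ℂ) : ℝ :=
  sInf { x | ∃ (N : ℕ) (p : Fin N → ℝ) (ψs : Fin N → ((∀ i, Fin (d i)) → ℂ)),
    (∀ i, 0 ≤ p i) ∧ (∑ i, p i = 1) ∧ (∀ i, IsState d (ψs i)) ∧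
    ρ = ∑ i, p i • pureDensity d (ψs i) ∧ x = ∑ i, p i * Ep (ψs i) }

/-- Generalized `n`-qudit GHZ state. -/
def ghz (n dd : ℕ) : (∀ _ : Fin n, Fin dd) → ℂ :=
  fun x => if ∃ j, ∀ i, x i = j then ((Real.sqrt dd)⁻¹ : ℝ) else 0

/-- The three-qubit W state. -/
def w3 : (∀ _ : Fin 3, Fin 2) → ℂ :=
  fun x => if (∑ i, ((x i : ℕ))) = 1 then ((Real.sqrt 3)⁻¹ : ℝ) else 0

/-- The two-qubit maximally entangled state `|ψ⁺⟩`. -/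
def bell : (∀ _ : Fin 2, Fin 2) → ℂ :=
  fun x => if x 0 = x 1 then ((Real.sqrt 2)⁻¹ : ℝ) else 0

end

end KPE

/-!
The purity `Tr ρ² = ∑ λᵢ²` of a density matrix lies in `[0, 1]` and is multiplicative under `⊗ₖ`.
For purities `x, y ≤ 1` we have `1 - x y ≤ (1 - x) + (1 - y)`, since `(1 - x)(1 - y) ≥ 0`, and
subadditivity of the square root finishes the proof.
-/

open scoped Kronecker

theorem Matrix.trace_kronecker_mul_self {R m n : Type*} [CommSemiring R] [Fintype m] [Fintype n]
    (A : Matrix m m R) (B : Matrix n n R) :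
    ((A ⊗ₖ B) * (A ⊗ₖ B)).trace = (A * A).trace * (B * B).trace := by
  rw [← mul_kronecker_mul, trace_kronecker]

theorem Matrix.IsHermitian.trace_mul_self {𝕜 n : Type*} [RCLike 𝕜] [Fintype n] [DecidableEq n]
    {A : Matrix n n 𝕜} (hA : A.IsHermitian) :
    (A * A).trace = ((∑ i, hA.eigenvalues i ^ 2 : ℝ) : 𝕜) := by
  conv_lhs => rw [hA.spectral_theorem, ← map_mul, Unitary.conjStarAlgAut_apply, trace_mul_cycle,
    Unitary.coe_star_mul_self, one_mul, diagonal_mul_diagonal, trace_diagonal]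
  simp [sq]

theorem Matrix.PosSemidef.sum_eigenvalues_sq_le_one {𝕜 n : Type*} [RCLike 𝕜] [Fintype n]
    [DecidableEq n] {A : Matrix n n 𝕜} (hA : A.PosSemidef) (h1 : A.trace = 1) :
    ∑ i, hA.isHermitian.eigenvalues i ^ 2 ≤ 1 := by
  have hsum : ∑ i, hA.isHermitian.eigenvalues i = 1 := by
    exact_mod_cast hA.isHermitian.trace_eq_sum_eigenvalues.symm.trans h1
  calc ∑ i, hA.isHermitian.eigenvalues i ^ 2
      ≤ (∑ i, hA.isHermitian.eigenvalues i) ^ 2 :=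
        Finset.sum_sq_le_sq_sum_of_nonneg fun i _ => hA.eigenvalues_nonneg i
    _ = 1 := by rw [hsum, one_pow]

theorem Real.sqrt_add_le_add_sqrt {a b : ℝ} (ha : 0 ≤ a) (hb : 0 ≤ b) :
    √(a + b) ≤ √a + √b := by
  rw [Real.sqrt_le_left (by positivity), add_sq, Real.sq_sqrt ha, Real.sq_sqrt hb]
  nlinarith [Real.sqrt_nonneg a, Real.sqrt_nonneg b]

theorem Real.sqrt_two_mul_one_sub_mul_le {x y : ℝ} (hx : x ≤ 1) (hy : y ≤ 1) :
    √(2 * (1 - x * y)) ≤ √(2 * (1 - x)) + √(2 * (1 - y)) :=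
  calc √(2 * (1 - x * y)) ≤ √(2 * (1 - x) + 2 * (1 - y)) :=
        Real.sqrt_le_sqrt (by nlinarith)
    _ ≤ √(2 * (1 - x)) + √(2 * (1 - y)) :=
        Real.sqrt_add_le_add_sqrt (by linarith) (by linarith)

open Kronecker in
/-- `h_C` is subadditive on product states:
`h_C(ρ^A ⊗ ρ^B) ≤ h_C(ρ^A) + h_C(ρ^B)`. -/
theorem hC_subadditive_on_products {α β : Type} [Fintype α] [Fintype β]
    (ρ : Matrix α α ℂ) (σ : Matrix β β ℂ)
    (hρ : ρ.PosSemidef) (hρ1 : ρ.trace = 1) (hσ : σ.PosSemidef) (hσ1 : σ.trace = 1) :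
    KPE.hC (ρ ⊗ₖ σ) ≤ KPE.hC ρ + KPE.hC σ := by
  classical
  have hρρ := hρ.isHermitian.trace_mul_self
  have hσσ := hσ.isHermitian.trace_mul_self
  have hprod := trace_kronecker_mul_self ρ σ
  rw [hρρ, hσσ, ← RCLike.ofReal_mul] at hprod
  simp only [KPE.hC, hprod, hρρ, hσσ, ← RCLike.re_to_complex, RCLike.ofReal_re]
  exact Real.sqrt_two_mul_one_sub_mul_le (hρ.sum_eigenvalues_sq_le_one hρ1)
    (hσ.sum_eigenvalues_sq_le_one hσ1)
end

section
/- The averaged concurrence-based measure C_{(k)}(|ψ⟩) = min over (k−1)-fineness m-partitions of (1/m) Σ_t h_C(ρ^{X_t}) fails additivity: there exists a pure state |ψ⟩^{AB}⊗|ψ⟩^{C}⊗|ψ⟩^{DEF} (with |ψ⟩^{DEF} genuinely entangled, |ψ⟩^{AB} possibly entangled) such that C_{(3)}(|ψ⟩^{AB}⊗|ψ⟩^{C}) + C_{(3)}(|ψ⟩^{DEF}) ≠ C_{(3)}(|ψ⟩^{AB}⊗|ψ⟩^{C}⊗|ψ⟩^{DEF}). -/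
open scoped BigOperators
open Matrix
open scoped ComplexOrder

/-- The family version of `h_C`, usable as a reduced function on every subsystem. -/
noncomputable def hCF : ∀ (α : Type) [Fintype α] [DecidableEq α], Matrix α α ℂ → ℝ :=
  fun _ _ _ ρ => KPE.hC ρ

/-- The family version of the von Neumann entropy (in bits). -/
noncomputable def vNF : ∀ (α : Type) [Fintype α] [DecidableEq α], Matrix α α ℂ → ℝ :=
  fun _ _ _ ρ => KPE.vNEntropy ρ

/-!
Take `|ψ^{AB}⟩ = |00⟩`, `|ψ^C⟩ = |0⟩` and `|ψ^{DEF}⟩ = GHZ₃`. Writing `z_X w_{Xᶜ}` for the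
configuration that agrees with `z` on `X` and with `w` off `X` (`splice X z w`), the purity of a
reduced state is `Tr ρ_X² = ∑_{z,w} ψ(z) ψ̄(w_X z_{Xᶜ}) ψ(w) ψ̄(z_X w_{Xᶜ})`. For a state supported
on two configurations `p, q` of weight `1/2` each, this gives `h_C(ρ_X) = 0` when `p, q` agree on
`X` and `h_C(ρ_X) = 1` when they differ both inside and outside `X`. Hence every block of a 2-fine
partition of `DEF` has `h_C = 1`, so `C_{(3)}(GHZ₃) = 1`, while for the six-party state the
partition `{A}, {B}, {C}, {D, E}, {F}` has only two blocks out of five with `h_C = 1`, so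
`C_{(3)}(|00⟩ ⊗ |0⟩ ⊗ GHZ₃) ≤ 2/5 < 1 ≤ C_{(3)}(|00⟩ ⊗ |0⟩) + C_{(3)}(GHZ₃)`.
-/

theorem hCF_nonneg (α : Type) [Fintype α] [DecidableEq α] (ρ : Matrix α α ℂ) :
    0 ≤ hCF α ρ :=
  Real.sqrt_nonneg _

namespace KPE

open Finset ComplexConjugate

section Splice

variable {ι : Type} [DecidableEq ι] {d : ι → ℕ}

def splice (X : Finset ι) (z w : ∀ i, Fin (d i)) : ∀ i, Fin (d i) :=
  glue d X (fun i => z i) (fun i => w i)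

theorem splice_apply_of_mem {X : Finset ι} {i : ι} (hi : i ∈ X) (z w : ∀ i, Fin (d i)) :
    splice X z w i = z i := dif_pos hi

theorem splice_apply_of_notMem {X : Finset ι} {i : ι} (hi : i ∉ X) (z w : ∀ i, Fin (d i)) :
    splice X z w i = w i := dif_neg hi

theorem splice_eq_right {X : Finset ι} {z w : ∀ i, Fin (d i)} (h : ∀ i ∈ X, z i = w i) :
    splice X z w = w := by
  funext i
  by_cases hi : i ∈ X
  · rw [splice_apply_of_mem hi, h i hi]
  · rw [splice_apply_of_notMem hi]

theorem splice_glue (X : Finset ι) (a b : ∀ i : {i // i ∈ X}, Fin (d i))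
    (c c' : ∀ i : {i // i ∉ X}, Fin (d i)) :
    splice X (glue d X a c) (glue d X b c') = glue d X a c' := by
  funext i
  by_cases hi : i ∈ X <;> simp [splice, glue, hi]

theorem mul_eq_mul_splice_of_factors {ψ : (∀ i, Fin (d i)) → ℂ} {X : Finset ι}
    {φ : (∀ i : {i // i ∈ X}, Fin (d i)) → ℂ} {χ : (∀ i : {i // i ∉ X}, Fin (d i)) → ℂ}
    (hfac : ∀ x, ψ x = φ (fun i => x i.1) * χ (fun i => x i.1)) (z w : ∀ i, Fin (d i)) :
    ψ z * ψ w = ψ (splice X z w) * ψ (splice X w z) := by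
  have hin : ∀ u v : ∀ i, Fin (d i),
      (fun i : {i // i ∈ X} => splice X u v i) = fun i : {i // i ∈ X} => u i :=
    fun u v => funext fun i => splice_apply_of_mem i.2 u v
  have hout : ∀ u v : ∀ i, Fin (d i),
      (fun i : {i // i ∉ X} => splice X u v i) = fun i : {i // i ∉ X} => v i :=
    fun u v => funext fun i => splice_apply_of_notMem i.2 u v
  simp only [hfac, hin, hout]
  ring

end Splice

section Purity

variable {ι : Type} [Fintype ι] [DecidableEq ι] {d : ι → ℕ}

theorem trace_reduced_mul_self (ψ : (∀ i, Fin (d i)) → ℂ) (X : Finset ι) :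
    (reduced d ψ X * reduced d ψ X).trace =
      ∑ z, ∑ w, ψ z * conj (ψ (splice X w z)) * ψ w * conj (ψ (splice X z w)) := by
  let e := (Equiv.piEquivPiSubtypeProd (· ∈ X) fun i => Fin (d i)).symm
  have he : ∀ ac, e ac = glue d X ac.1 ac.2 := fun _ => rfl
  simp_rw [← e.sum_comp, he, splice_glue, Fintype.sum_prod_type]
  simp only [Matrix.trace, Matrix.diag, Matrix.mul_apply, reduced, Finset.sum_mul_sum]
  refine Finset.sum_congr rfl fun a _ => ?_
  rw [Finset.sum_comm]
  refine Finset.sum_congr rfl fun c _ => Finset.sum_congr rfl fun b _ =>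
    Finset.sum_congr rfl fun c' _ => ?_
  ring

theorem trace_reduced_mul_self_of_support_subset {ψ : (∀ i, Fin (d i)) → ℂ}
    {S : Finset (∀ i, Fin (d i))} (hS : Function.support ψ ⊆ S) (X : Finset ι) :
    (reduced d ψ X * reduced d ψ X).trace =
      ∑ z ∈ S, ∑ w ∈ S, ψ z * conj (ψ (splice X w z)) * ψ w * conj (ψ (splice X z w)) := by
  have hzero : ∀ z ∉ S, ψ z = 0 := fun z hz => Function.notMem_support.mp fun h => hz (hS h)
  rw [trace_reduced_mul_self, ← Finset.sum_subset (Finset.subset_univ S)]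
  · refine Finset.sum_congr rfl fun z _ => (Finset.sum_subset (Finset.subset_univ S) ?_).symm
    intro w _ hw
    rw [hzero w hw]
    ring
  · intro z _ hz
    simp [hzero z hz]

theorem trace_reduced_mul_self_eq_one {ψ : (∀ i, Fin (d i)) → ℂ} (hψ : IsState d ψ)
    {S : Finset (∀ i, Fin (d i))} (hS : Function.support ψ ⊆ S) {X : Finset ι}
    (hagree : ∀ z ∈ S, ∀ w ∈ S, ∀ i ∈ X, z i = w i) :
    (reduced d ψ X * reduced d ψ X).trace = 1 := by
  have hnorm : ∑ z ∈ S, (Complex.normSq (ψ z) : ℂ) = 1 := by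
    rw [← Complex.ofReal_one, ← hψ, Complex.ofReal_sum]
    refine Finset.sum_subset (Finset.subset_univ S) fun z _ hz => ?_
    rw [Function.notMem_support.mp fun h => hz (hS h), map_zero, Complex.ofReal_zero]
  rw [trace_reduced_mul_self_of_support_subset hS, ← one_pow 2, ← hnorm, sq,
    Finset.sum_mul_sum]
  refine Finset.sum_congr rfl fun z hz => Finset.sum_congr rfl fun w hw => ?_
  rw [splice_eq_right (hagree w hw z hz), splice_eq_right (hagree z hz w hw),
    Complex.normSq_eq_conj_mul_self, Complex.normSq_eq_conj_mul_self]
  ring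

theorem trace_reduced_mul_self_of_support_pair {ψ : (∀ i, Fin (d i)) → ℂ}
    {p q : ∀ i, Fin (d i)} (hS : Function.support ψ ⊆ {p, q}) {X : Finset ι}
    (hin : ∃ i ∈ X, p i ≠ q i) (hout : ∃ i ∉ X, p i ≠ q i) :
    (reduced d ψ X * reduced d ψ X).trace =
      ((Complex.normSq (ψ p) ^ 2 + Complex.normSq (ψ q) ^ 2 : ℝ) : ℂ) := by
  obtain ⟨i, hiX, hpqi⟩ := hin
  obtain ⟨j, hjX, hpqj⟩ := hout
  have hpq : p ≠ q := fun h => hpqi (congrFun h i)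
  have hzero : ∀ z, z ≠ p → z ≠ q → ψ z = 0 := fun z hp hq =>
    Function.notMem_support.mp fun h => by simpa [hp, hq] using hS h
  have hqp : ψ (splice X q p) = 0 := hzero _
    (fun h => hpqi ((splice_apply_of_mem hiX q p).symm.trans (congrFun h i)).symm)
    (fun h => hpqj ((splice_apply_of_notMem hjX q p).symm.trans (congrFun h j)))
  have hpq' : ψ (splice X p q) = 0 := hzero _
    (fun h => hpqj ((splice_apply_of_notMem hjX p q).symm.trans (congrFun h j)).symm)
    (fun h => hpqi ((splice_apply_of_mem hiX p q).symm.trans (congrFun h i)))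
  rw [trace_reduced_mul_self_of_support_subset (S := {p, q}) (by simpa using hS),
    Finset.sum_pair hpq, Finset.sum_pair hpq, Finset.sum_pair hpq, hqp, hpq',
    splice_eq_right fun _ _ => rfl, splice_eq_right fun _ _ => rfl]
  push_cast
  rw [Complex.normSq_eq_conj_mul_self, Complex.normSq_eq_conj_mul_self, map_zero]
  ring

end Purity

section Concurrence

variable {ι : Type} [Fintype ι] [DecidableEq ι] {d : ι → ℕ} {ψ : (∀ i, Fin (d i)) → ℂ}
  {X : Finset ι}

theorem hC_of_trace_mul_self {α : Type} [Fintype α] {ρ : Matrix α α ℂ} {t : ℝ}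
    (h : (ρ * ρ).trace = t) : hC ρ = √(2 * (1 - t)) := by
  rw [hC, h, Complex.ofReal_re]

theorem hC_reduced_eq_zero (hψ : IsState d ψ) {S : Finset (∀ i, Fin (d i))}
    (hS : Function.support ψ ⊆ S) (hagree : ∀ z ∈ S, ∀ w ∈ S, ∀ i ∈ X, z i = w i) :
    hC (reduced d ψ X) = 0 := by
  rw [hC_of_trace_mul_self (t := 1)
    (by rw [trace_reduced_mul_self_eq_one hψ hS hagree, Complex.ofReal_one])]
  simp

theorem hC_reduced_eq_one {p q : ∀ i, Fin (d i)} (hS : Function.support ψ ⊆ {p, q})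
    (hp : Complex.normSq (ψ p) = 1 / 2) (hq : Complex.normSq (ψ q) = 1 / 2)
    (hin : ∃ i ∈ X, p i ≠ q i) (hout : ∃ i ∉ X, p i ≠ q i) :
    hC (reduced d ψ X) = 1 := by
  rw [hC_of_trace_mul_self (trace_reduced_mul_self_of_support_pair hS hin hout), hp, hq]
  norm_num

end Concurrence

noncomputable section Average

variable {ι : Type} [Fintype ι] [DecidableEq ι]

def blockAvg (d : ι → ℕ) (h : ∀ (α : Type) [Fintype α] [DecidableEq α], Matrix α α ℂ → ℝ)
    (ψ : (∀ i, Fin (d i)) → ℂ) (P : ι → ι) : ℝ :=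
  (∑ b ∈ univ.filter (fun b => (fiber P b).Nonempty), h _ (reduced d ψ (fiber P b))) /
    ((univ.filter (fun b => (fiber P b).Nonempty)).card : ℝ)

variable {d : ι → ℕ} {h : ∀ (α : Type) [Fintype α] [DecidableEq α], Matrix α α ℂ → ℝ}
  {ψ : (∀ i, Fin (d i)) → ℂ}

theorem blockAvg_nonneg (hh : ∀ (α : Type) [Fintype α] [DecidableEq α] (ρ : Matrix α α ℂ),
    0 ≤ h α ρ) (P : ι → ι) : 0 ≤ blockAvg d h ψ P :=
  div_nonneg (sum_nonneg fun _ _ => hh _ _) (Nat.cast_nonneg _)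

theorem blockAvg_eq_of_forall [Nonempty ι] {P : ι → ι} {c : ℝ}
    (hc : ∀ b, (fiber P b).Nonempty → h _ (reduced d ψ (fiber P b)) = c) :
    blockAvg d h ψ P = c := by
  obtain ⟨i⟩ := ‹Nonempty ι›
  have hmem : P i ∈ univ.filter (fun b => (fiber P b).Nonempty) :=
    mem_filter.mpr ⟨mem_univ _, i, mem_filter.mpr ⟨mem_univ _, rfl⟩⟩
  rw [blockAvg, sum_congr rfl fun b hb => hc b (mem_filter.mp hb).2, sum_const, nsmul_eq_mul,
    mul_div_cancel_left₀ _ (Nat.cast_ne_zero.mpr (card_ne_zero_of_mem hmem))]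

theorem fineness_id {k : ℕ} (hk : 1 ≤ k) : Fineness (id : ι → ι) k := fun b => by
  simpa [fiber, filter_eq'] using hk

theorem Cavg_le_blockAvg (hh : ∀ (α : Type) [Fintype α] [DecidableEq α] (ρ : Matrix α α ℂ),
    0 ≤ h α ρ) {k : ℕ} {P : ι → ι} (hP : Fineness P (k - 1)) :
    Cavg d h k ψ ≤ blockAvg d h ψ P :=
  csInf_le ⟨0, by rintro _ ⟨Q, -, rfl⟩; exact blockAvg_nonneg hh Q⟩ ⟨P, hP, rfl⟩

theorem le_Cavg {k : ℕ} (hk : 2 ≤ k) {v : ℝ}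
    (hv : ∀ P : ι → ι, Fineness P (k - 1) → v ≤ blockAvg d h ψ P) : v ≤ Cavg d h k ψ :=
  le_csInf ⟨_, id, fineness_id (by omega), rfl⟩ fun _ ⟨P, hP, hx⟩ => hx ▸ hv P hP

theorem Cavg_nonneg (hh : ∀ (α : Type) [Fintype α] [DecidableEq α] (ρ : Matrix α α ℂ),
    0 ≤ h α ρ) {k : ℕ} (hk : 2 ≤ k) : 0 ≤ Cavg d h k ψ :=
  le_Cavg hk fun P _ => blockAvg_nonneg hh P

theorem Cavg_eq_of_forall [Nonempty ι] {k : ℕ} (hk : 2 ≤ k) {c : ℝ}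
    (hc : ∀ P : ι → ι, Fineness P (k - 1) → ∀ b, (fiber P b).Nonempty →
      h _ (reduced d ψ (fiber P b)) = c) :
    Cavg d h k ψ = c := by
  have hP : ∀ P : ι → ι, Fineness P (k - 1) → blockAvg d h ψ P = c :=
    fun P hP => blockAvg_eq_of_forall (hc P hP)
  have hid : Fineness (id : ι → ι) (k - 1) := fineness_id (by omega)
  refine le_antisymm (csInf_le ⟨c, ?_⟩ ⟨id, hid, (hP id hid).symm⟩)
    (le_Cavg hk fun P hP' => (hP P hP').ge)
  rintro _ ⟨P, hP', rfl⟩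
  exact (hP P hP').ge

end Average

theorem isState_single {ι : Type} [Fintype ι] [DecidableEq ι] {d : ι → ℕ}
    (p : ∀ i, Fin (d i)) : IsState d (Pi.single p 1) := by
  simp [IsState, Pi.single_apply]

section Ghz

variable {n dd : ℕ}

theorem ghz_const (j : Fin dd) : ghz n dd (fun _ => j) = ((√dd)⁻¹ : ℝ) :=
  if_pos ⟨j, fun _ => rfl⟩

theorem normSq_ghz_const (j : Fin dd) : Complex.normSq (ghz n dd fun _ => j) = (dd : ℝ)⁻¹ := by
  rw [ghz_const, Complex.normSq_ofReal, ← mul_inv, Real.mul_self_sqrt (Nat.cast_nonneg _)]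

theorem ghz_ne_zero_const (hd : 0 < dd) (j : Fin dd) : ghz n dd (fun _ => j) ≠ 0 := by
  rw [ghz_const, Complex.ofReal_ne_zero]
  positivity

theorem exists_eq_const_of_ghz_ne_zero {x : Fin n → Fin dd} (hx : ghz n dd x ≠ 0) :
    ∃ j, x = fun _ => j := by
  by_contra hc
  exact hx (if_neg fun ⟨j, hj⟩ => hc ⟨j, funext hj⟩)

theorem isState_ghz (hn : 0 < n) (hd : 0 < dd) : IsState (fun _ : Fin n => dd) (ghz n dd) := by
  have hinj : Function.Injective fun (j : Fin dd) (_ : Fin n) => j :=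
    fun a b h => congrFun h ⟨0, hn⟩
  rw [IsState, ← sum_subset (subset_univ (univ.image fun (j : Fin dd) (_ : Fin n) => j)),
    sum_image fun a _ b _ h => hinj h]
  · simp only [normSq_ghz_const, sum_const, card_univ, Fintype.card_fin, nsmul_eq_mul]
    exact mul_inv_cancel₀ (Nat.cast_ne_zero.mpr hd.ne')
  · intro x _ hx
    rw [Complex.normSq_eq_zero]
    by_contra h
    obtain ⟨j, rfl⟩ := exists_eq_const_of_ghz_ne_zero h
    exact hx (mem_image_of_mem _ (mem_univ j))

theorem support_ghz_subset :
    Function.support (ghz n 2) ⊆ {fun _ => 0, fun _ => 1} := by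
  intro x hx
  obtain ⟨j, rfl⟩ := exists_eq_const_of_ghz_ne_zero hx
  fin_cases j <;> simp

theorem ghz_genuinelyEntangled (hd : 2 ≤ dd) :
    GenuinelyEntangled (fun _ : Fin n => dd) (ghz n dd) := by
  rintro X hX hXu ⟨φ, χ, hfac⟩
  obtain ⟨i, hi⟩ := nonempty_iff_ne_empty.mpr hX
  obtain ⟨j, hj⟩ : ∃ j, j ∉ X := by simpa [eq_univ_iff_forall] using hXu
  let a : Fin dd := ⟨0, by omega⟩
  let b : Fin dd := ⟨1, by omega⟩
  have hmixed : ghz n dd (splice X (fun _ => a) (fun _ => b)) = 0 := by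
    refine if_neg fun ⟨c, hc⟩ => ?_
    have ha := hc i
    have hb := hc j
    rw [splice_apply_of_mem hi] at ha
    rw [splice_apply_of_notMem hj] at hb
    exact absurd (ha.trans hb.symm) (by simp [a, b, Fin.ext_iff])
  have := mul_eq_mul_splice_of_factors hfac (fun _ => a) (fun _ => b)
  rw [hmixed, zero_mul] at this
  exact mul_ne_zero (ghz_ne_zero_const (by omega) a) (ghz_ne_zero_const (by omega) b) this

end Ghz

theorem hC_reduced_ghz {n : ℕ} {X : Finset (Fin n)} (hX : X.Nonempty) (hXu : X ≠ univ) :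
    hC (reduced (fun _ => 2) (ghz n 2) X) = 1 := by
  obtain ⟨i, hi⟩ := hX
  obtain ⟨j, hj⟩ : ∃ j, j ∉ X := by simpa [eq_univ_iff_forall] using hXu
  refine hC_reduced_eq_one support_ghz_subset ?_ ?_ ⟨i, hi, by decide⟩ ⟨j, hj, by decide⟩ <;>
    simp [normSq_ghz_const]

theorem Cavg_ghz {n k : ℕ} (hk : 2 ≤ k) (hkn : k ≤ n) :
    Cavg (fun _ : Fin n => 2) hCF k (ghz n 2) = 1 := by
  have : Nonempty (Fin n) := ⟨⟨0, by omega⟩⟩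
  refine Cavg_eq_of_forall hk fun P hP b hb => hC_reduced_ghz hb fun hu => ?_
  have := hP b
  rw [hu, card_univ, Fintype.card_fin] at this
  omega

section Tensor

variable {ι κ : Type} {d : ι → ℕ} {e : κ → ℕ}

variable (d e) in
def joinPt (x : ∀ i, Fin (d i)) (y : ∀ j, Fin (e j)) : ∀ k : ι ⊕ κ, Fin (Sum.elim d e k) :=
  (Equiv.sumPiEquivProdPi fun k => Fin (Sum.elim d e k)).symm (x, y)

theorem tens_joinPt (ψ : (∀ i, Fin (d i)) → ℂ) (φ : (∀ j, Fin (e j)) → ℂ)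
    (x : ∀ i, Fin (d i)) (y : ∀ j, Fin (e j)) :
    tens d e ψ φ (joinPt d e x y) = ψ x * φ y := rfl

theorem support_tens_subset (ψ : (∀ i, Fin (d i)) → ℂ) (φ : (∀ j, Fin (e j)) → ℂ) :
    Function.support (tens d e ψ φ) ⊆
      Set.image2 (joinPt d e) (Function.support ψ) (Function.support φ) := fun z hz =>
  ⟨_, (mul_ne_zero_iff.mp hz).1, _, (mul_ne_zero_iff.mp hz).2, Equiv.symm_apply_apply _ z⟩

theorem IsState.tens [Fintype ι] [DecidableEq ι] [Fintype κ] [DecidableEq κ]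
    {ψ : (∀ i, Fin (d i)) → ℂ} {φ : (∀ j, Fin (e j)) → ℂ} (hψ : IsState d ψ)
    (hφ : IsState e φ) : IsState (Sum.elim d e) (tens d e ψ φ) := by
  rw [IsState, ← (Equiv.sumPiEquivProdPi fun k => Fin (Sum.elim d e k)).symm.sum_comp,
    Fintype.sum_prod_type]
  change ∑ x, ∑ y, Complex.normSq (ψ x * φ y) = 1
  simp only [Complex.normSq_mul, ← Finset.sum_mul_sum]
  rw [IsState] at hψ hφ
  rw [hψ, hφ, mul_one]

end Tensor

section SixParties

local notation "d₃" => Sum.elim (fun _ : Fin 2 => 2) (fun _ : Fin 1 => 2)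
local notation "d₆" => Sum.elim d₃ (fun _ : Fin 3 => 2)
local notation "ψ₆" => tens d₃ (fun _ : Fin 3 => 2)
  (tens (fun _ : Fin 2 => 2) (fun _ : Fin 1 => 2) (Pi.single 0 1) (Pi.single 0 1)) (ghz 3 2)

abbrev ghzBranch (j : Fin 2) : ∀ i, Fin (d₆ i) :=
  joinPt d₃ (fun _ : Fin 3 => 2) (joinPt (fun _ : Fin 2 => 2) (fun _ : Fin 1 => 2) 0 0)
    fun _ => j

theorem support_sixParties_subset :
    Function.support ψ₆ ⊆ {ghzBranch 0, ghzBranch 1} := by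
  refine (support_tens_subset _ _).trans <| (Set.image2_subset ((support_tens_subset _ _).trans
    (Set.image2_subset Pi.support_single_subset Pi.support_single_subset))
      support_ghz_subset).trans ?_
  simp only [Set.image2_singleton_left, Set.image_singleton, Set.image2_singleton_right,
    Set.image_insert_eq]
  rw [Set.pair_comm]

theorem normSq_sixParties_ghzBranch (j : Fin 2) : Complex.normSq (ψ₆ (ghzBranch j)) = 1 / 2 := by
  rw [tens_joinPt, tens_joinPt, Pi.single_eq_same, Pi.single_eq_same, one_mul, one_mul,
    normSq_ghz_const]
  norm_num

theorem hC_sixParties_eq_zero {X : Finset ((Fin 2 ⊕ Fin 1) ⊕ Fin 3)}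
    (hX : ∀ j, Sum.inr j ∉ X) : hC (reduced d₆ ψ₆ X) = 0 := by
  refine hC_reduced_eq_zero ((isState_single _).tens (isState_single _) |>.tens
    (isState_ghz (by norm_num) (by norm_num))) (S := {ghzBranch 0, ghzBranch 1})
    (by simpa using support_sixParties_subset) ?_
  simp only [mem_insert, mem_singleton]
  rintro z (rfl | rfl) w (rfl | rfl) (i | j) hi
  all_goals first | rfl | exact absurd hi (hX j)

theorem hC_sixParties_eq_one {X : Finset ((Fin 2 ⊕ Fin 1) ⊕ Fin 3)}
    (hin : ∃ j, Sum.inr j ∈ X) (hout : ∃ j, Sum.inr j ∉ X) : hC (reduced d₆ ψ₆ X) = 1 := by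
  obtain ⟨j, hj⟩ := hin
  obtain ⟨j', hj'⟩ := hout
  exact hC_reduced_eq_one support_sixParties_subset (normSq_sixParties_ghzBranch 0)
    (normSq_sixParties_ghzBranch 1) ⟨_, hj, (zero_ne_one : (0 : Fin 2) ≠ 1)⟩
    ⟨_, hj', (zero_ne_one : (0 : Fin 2) ≠ 1)⟩

/- The parties `A, B, C, D, E, F` are `inl (inl 0), inl (inl 1), inl (inr 0), inr 0, inr 1, inr 2`,
and `mergeDE` is the partition `{A}, {B}, {C}, {D, E}, {F}`. -/
def mergeDE : (Fin 2 ⊕ Fin 1) ⊕ Fin 3 → (Fin 2 ⊕ Fin 1) ⊕ Fin 3 :=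
  fun i => if i = .inr 1 then .inr 0 else i

theorem blockAvg_sixParties_mergeDE : blockAvg d₆ hCF ψ₆ mergeDE = 2 / 5 := by
  have hblocks : univ.filter (fun b => (fiber mergeDE b).Nonempty) =
      {.inl (.inl 0), .inl (.inl 1), .inl (.inr 0), .inr 0, .inr 2} := by decide
  have hcard : (univ.filter (fun b => (fiber mergeDE b).Nonempty)).card = 5 := by decide
  rw [blockAvg, hcard, hblocks, sum_insert (by decide), sum_insert (by decide),
    sum_insert (by decide), sum_insert (by decide), sum_singleton]
  simp only [hCF]
  rw [hC_sixParties_eq_zero (by decide), hC_sixParties_eq_zero (by decide),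
    hC_sixParties_eq_zero (by decide), hC_sixParties_eq_one ⟨0, by decide⟩ ⟨2, by decide⟩,
    hC_sixParties_eq_one ⟨2, by decide⟩ ⟨0, by decide⟩]
  norm_num

theorem Cavg_sixParties_le : Cavg d₆ hCF 3 ψ₆ ≤ 2 / 5 :=
  blockAvg_sixParties_mergeDE ▸ Cavg_le_blockAvg hCF_nonneg (by unfold Fineness; decide)

end SixParties

end KPE

/-- the averaged concurrence-based measure `C_{(k)}` fails additivity:
there are pure states `|ψ⟩^{AB}`, `|ψ⟩^{C}`, `|ψ⟩^{DEF}` (with `|ψ⟩^{DEF}` genuinely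
entangled) such that `C_{(3)}(|ψ⟩^{AB}⊗|ψ⟩^{C}) + C_{(3)}(|ψ⟩^{DEF}) ≠
C_{(3)}(|ψ⟩^{AB}⊗|ψ⟩^{C}⊗|ψ⟩^{DEF})`. -/
theorem Cavg_not_additive :
    ∃ (ψAB : (∀ _ : Fin 2, Fin 2) → ℂ) (ψC : (∀ _ : Fin 1, Fin 2) → ℂ)
      (ψDEF : (∀ _ : Fin 3, Fin 2) → ℂ),
      KPE.IsState (fun _ => 2) ψAB ∧ KPE.IsState (fun _ => 2) ψC ∧
      KPE.IsState (fun _ => 2) ψDEF ∧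
      KPE.GenuinelyEntangled (fun _ : Fin 3 => 2) ψDEF ∧
      KPE.Cavg (Sum.elim (fun _ : Fin 2 => 2) (fun _ : Fin 1 => 2)) hCF 3
          (KPE.tens (fun _ : Fin 2 => 2) (fun _ : Fin 1 => 2) ψAB ψC)
        + KPE.Cavg (fun _ : Fin 3 => 2) hCF 3 ψDEF
        ≠ KPE.Cavg
            (Sum.elim (Sum.elim (fun _ : Fin 2 => 2) (fun _ : Fin 1 => 2)) (fun _ : Fin 3 => 2))
            hCF 3
            (KPE.tens (Sum.elim (fun _ : Fin 2 => 2) (fun _ : Fin 1 => 2)) (fun _ : Fin 3 => 2)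
              (KPE.tens (fun _ : Fin 2 => 2) (fun _ : Fin 1 => 2) ψAB ψC) ψDEF) := by
  refine ⟨Pi.single 0 1, Pi.single 0 1, KPE.ghz 3 2, KPE.isState_single 0,
    KPE.isState_single 0, KPE.isState_ghz (by norm_num) (by norm_num),
    KPE.ghz_genuinelyEntangled le_rfl, ?_⟩
  rw [KPE.Cavg_ghz (n := 3) (k := 3) (by norm_num) le_rfl]
  refine (KPE.Cavg_sixParties_le.trans_lt ?_).ne'
  exact lt_add_of_nonneg_of_lt (KPE.Cavg_nonneg hCF_nonneg (by norm_num)) (by norm_num)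
end
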